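/- If p is a prime with p < 2n+1 and 2n+p is prime, then the ladder P_n × P_2 has a consecutive cyclic prime labeling; specifically, defining the labeling that assigns to the cycle v_1,...,v_n,u_n,...,u_1 the consecutive values (starting with 1 placed so that exactly (p-1)/2 - 1 vertices lie to its right in the top row) yields adjacent vertices with coprime labels. -/

import Mathlib

/-- Adjacency in the ladder graph `P_n × P_2`: vertices are pairs (column, row). -/
def ladderAdj (n : ℕ) (v w : Fin n × Fin 2) : Prop :=
  (v.2 = w.2 ∧ ((v.1 : ℕ) + 1 = (w.1 : ℕ) ∨ (w.1 : ℕ) + 1 = (v.1 : ℕ))) ∨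
  (v.1 = w.1 ∧ v.2 ≠ w.2)

/-- Position of a vertex along the cycle `v₁, …, v_n, u_n, …, u₁`. -/
def cyclePos (n : ℕ) (v : Fin n × Fin 2) : ℕ :=
  if v.2 = 0 then (v.1 : ℕ) + 1 else 2 * n - (v.1 : ℕ)

/-- The consecutive cyclic labeling in which the label 1 is placed on the top row,
`(p-1)/2 - 1` places from the top right vertex. -/
def ccpLabel (n p : ℕ) (v : Fin n × Fin 2) : ℕ :=
  (cyclePos n v + 2 * n - (n + 1 - (p - 1) / 2)) % (2 * n) + 1

/-!
Consecutive labels are coprime, so the horizontal edges are harmless; they are exactly the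
edges joining consecutive positions of the cycle. The two ends of a vertical edge have cycle
positions summing to `2n + 1`, and the offset of the labeling is chosen so that their labels
then sum to `p` modulo `2n`. Both labels lie in `[1, 2n]`, so their sum is `p` or `2n + p`,
a prime; and two positive numbers with prime sum are coprime.
-/

theorem Nat.Coprime.of_prime_add {a b : ℕ} (ha : 0 < a) (hb : 0 < b) (h : (a + b).Prime) :
    a.Coprime b := by
  have hdvd : a.gcd b ∣ a + b := Nat.dvd_add (Nat.gcd_dvd_left a b) (Nat.gcd_dvd_right a b)
  have hle : a.gcd b ≤ a := Nat.le_of_dvd ha (Nat.gcd_dvd_left a b)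
  exact (h.eq_one_or_self_of_dvd _ hdvd).resolve_right (by omega)

theorem Nat.coprime_mod_add_one_mod_add_one (N x : ℕ) :
    (x % N + 1).Coprime ((x + 1) % N + 1) := by
  have hstep : (x + 1) % N = (x % N + 1) % N := (Nat.mod_add_mod x N 1).symm
  rcases (x % N + 1).lt_or_ge N with hlt | hge
  · rw [hstep, Nat.mod_eq_of_lt hlt]
    exact Nat.coprime_self_add_right.mpr (Nat.coprime_one_right _)
  · rcases N.eq_zero_or_pos with rfl | hN
    · simp only [Nat.mod_zero]
      exact Nat.coprime_self_add_right.mpr (Nat.coprime_one_right _)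
    · have hwrap : x % N + 1 = N := le_antisymm (Nat.mod_lt x hN) hge
      rw [hstep, hwrap, Nat.mod_self]
      exact Nat.coprime_one_right _

theorem Nat.coprime_of_add_modEq_prime {N q a b : ℕ} (ha : 0 < a) (hb : 0 < b) (haN : a ≤ N)
    (hbN : b ≤ N) (hqN : q < N) (hq : q.Prime) (hNq : (N + q).Prime)
    (h : a + b ≡ q [MOD N]) : a.Coprime b := by
  have hmod : (a + b) % N = q := by rw [← Nat.mod_eq_of_lt hqN]; exact h
  have hq2 := hq.two_le
  have hsum : a + b = q ∨ a + b = N + q := by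
    have hdiv : (a + b) / N ≤ 2 := Nat.div_le_of_le_mul (by omega)
    have hsplit := Nat.div_add_mod (a + b) N
    rw [hmod] at hsplit
    interval_cases (a + b) / N <;> omega
  rcases hsum with hs | hs
  · exact Nat.Coprime.of_prime_add ha hb (hs ▸ hq)
  · exact Nat.Coprime.of_prime_add ha hb (hs ▸ hNq)

section Ladder

variable {n : ℕ}

theorem one_le_cyclePos (v : Fin n × Fin 2) : 1 ≤ cyclePos n v := by
  have := v.1.isLt
  unfold cyclePos
  split_ifs <;> omega

theorem ladderAdj.cyclePos_cases {v w : Fin n × Fin 2} (h : ladderAdj n v w) :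
    cyclePos n w = cyclePos n v + 1 ∨ cyclePos n v = cyclePos n w + 1 ∨
      cyclePos n v + cyclePos n w = 2 * n + 1 := by
  obtain ⟨⟨i, hi⟩, s⟩ := v
  obtain ⟨⟨j, hj⟩, t⟩ := w
  fin_cases s <;> fin_cases t <;> simp [ladderAdj, cyclePos] at h ⊢ <;> omega

variable (p : ℕ)

theorem ccpLabel_le (hn : 0 < n) (v : Fin n × Fin 2) : ccpLabel n p v ≤ 2 * n :=
  Nat.mod_lt _ (by omega)

theorem ccpLabel_coprime_of_cyclePos_eq_add_one {v w : Fin n × Fin 2}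
    (h : cyclePos n w = cyclePos n v + 1) : (ccpLabel n p v).Coprime (ccpLabel n p w) := by
  have hv := one_le_cyclePos v
  have hshift : cyclePos n w + 2 * n - (n + 1 - (p - 1) / 2) =
      cyclePos n v + 2 * n - (n + 1 - (p - 1) / 2) + 1 := by omega
  unfold ccpLabel
  rw [hshift]
  exact Nat.coprime_mod_add_one_mod_add_one _ _

theorem ccpLabel_add_ccpLabel_modEq {v w : Fin n × Fin 2} (hp : Odd p) (hlt : p < 2 * n + 1)
    (h : cyclePos n v + cyclePos n w = 2 * n + 1) :
    ccpLabel n p v + ccpLabel n p w ≡ p [MOD 2 * n] := by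
  obtain ⟨k, rfl⟩ := hp
  have hv := one_le_cyclePos v
  unfold ccpLabel
  calc _ ≡ cyclePos n v + 2 * n - (n + 1 - (2 * k + 1 - 1) / 2) + 1 +
        (cyclePos n w + 2 * n - (n + 1 - (2 * k + 1 - 1) / 2) + 1) [MOD 2 * n] :=
          ((Nat.mod_modEq _ _).add_right 1).add ((Nat.mod_modEq _ _).add_right 1)
    _ = 2 * k + 1 + 2 * n * 2 := by omega
    _ ≡ 2 * k + 1 [MOD 2 * n] := Nat.add_modulus_mul_modEq_iff.mpr rfl

end Ladder

theorem stmt_8_general (n p : ℕ) (hp : Nat.Prime p) (hlt : p < 2 * n + 1)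
    (hq : Nat.Prime (2 * n + p)) :
    ∀ v w, ladderAdj n v w → Nat.Coprime (ccpLabel n p v) (ccpLabel n p w) := by
  have hn : 0 < n := by have := hp.two_le; omega
  have hodd : Odd p := hp.odd_of_ne_two <| by
    rintro rfl
    have := hq.even_iff.mp (by simp [Nat.even_add])
    omega
  have hlt' : p < 2 * n := by obtain ⟨k, rfl⟩ := hodd; omega
  intro v w hvw
  rcases hvw.cyclePos_cases with h | h | h
  · exact ccpLabel_coprime_of_cyclePos_eq_add_one p h
  · exact (ccpLabel_coprime_of_cyclePos_eq_add_one p h).symm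
  · exact Nat.coprime_of_add_modEq_prime (Nat.succ_pos _) (Nat.succ_pos _) (ccpLabel_le p hn v)
      (ccpLabel_le p hn w) hlt' hp hq (ccpLabel_add_ccpLabel_modEq p hodd hlt h)

theorem stmt_8 (n p : ℕ) (hn : 0 < n) (hp : Nat.Prime p) (hlt : p < 2 * n + 1)
    (hq : Nat.Prime (2 * n + p)) :
    ∀ v w, ladderAdj n v w → Nat.Coprime (ccpLabel n p v) (ccpLabel n p w) :=
  stmt_8_general n p hp hlt hq
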